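/- arXiv:0912.2899 — 3 statements merged into one kernel-verified Lean document; each statement's English description precedes it below -/
import Mathlib

section
/- Fix a positive integer n. For any nonnegative reals a_1, ..., a_n, sum_{s=0}^{⌊log₂ n⌋} 2^s · (sum_{l=1}^{n} a_l/(2^s + l - 1))² ≤ C · sum_{l=1}^{n} a_l², where C is an absolute constant independent of n and of the a_l. -/
/-!
Write the left side as `∑ₛ wₛ (∑ₗ Kₛₗ aₗ)²` with `wₛ = 2 ^ s` and `Kₛₗ = (2 ^ s + l - 1)⁻¹` and
apply the Schur test with the test weights `l ^ (-1/2)`: Cauchy–Schwarz against these weights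
reduces the claim to the row bound `∑ₗ Kₛₗ l ^ (-1/2) ≲ 2 ^ (-s/2)` and the column bound
`∑ₛ 2 ^ (s/2) Kₛₗ ≲ l ^ (-1/2)`. Both follow by splitting at `l ≈ 2 ^ s`, where `Kₛₗ` switches
from `≤ 2 ^ (-s)` to `≤ l⁻¹`; the pieces are telescoping sums of `l ^ (-1/2)` and `l ^ (-3/2)`
and geometric series in `√2`.
-/

open Finset

theorem schur_test {ι κ : Type*} (S : Finset ι) (L : Finset κ) (K : ι → κ → ℝ) (w A : ι → ℝ)
    (p a : κ → ℝ) (B : ℝ) (hK : ∀ s ∈ S, ∀ l ∈ L, 0 ≤ K s l) (hw : ∀ s ∈ S, 0 ≤ w s)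
    (hp : ∀ l ∈ L, 0 < p l) (hA : ∀ s ∈ S, w s * ∑ l ∈ L, K s l * p l ≤ A s)
    (hB : ∀ l ∈ L, ∑ s ∈ S, A s * K s l ≤ B * p l) :
    ∑ s ∈ S, w s * (∑ l ∈ L, K s l * a l) ^ 2 ≤ B * ∑ l ∈ L, a l ^ 2 := by
  have row : ∀ s ∈ S,
      w s * (∑ l ∈ L, K s l * a l) ^ 2 ≤ A s * ∑ l ∈ L, K s l * (a l ^ 2 / p l) := by
    intro s hs
    have cauchy_schwarz : (∑ l ∈ L, K s l * a l) ^ 2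
        ≤ (∑ l ∈ L, K s l * p l) * ∑ l ∈ L, K s l * (a l ^ 2 / p l) := by
      refine sum_sq_le_sum_mul_sum_of_sq_le_mul L
        (fun l hl => mul_nonneg (hK s hs l hl) (hp l hl).le)
        (fun l hl => mul_nonneg (hK s hs l hl) (div_nonneg (sq_nonneg _) (hp l hl).le))
        fun l hl => le_of_eq ?_
      field_simp [(hp l hl).ne']
    calc w s * (∑ l ∈ L, K s l * a l) ^ 2
        ≤ (w s * ∑ l ∈ L, K s l * p l) * ∑ l ∈ L, K s l * (a l ^ 2 / p l) := by
          rw [mul_assoc]; exact mul_le_mul_of_nonneg_left cauchy_schwarz (hw s hs)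
      _ ≤ A s * ∑ l ∈ L, K s l * (a l ^ 2 / p l) :=
          mul_le_mul_of_nonneg_right (hA s hs) <| sum_nonneg fun l hl =>
            mul_nonneg (hK s hs l hl) (div_nonneg (sq_nonneg _) (hp l hl).le)
  calc ∑ s ∈ S, w s * (∑ l ∈ L, K s l * a l) ^ 2
      ≤ ∑ s ∈ S, A s * ∑ l ∈ L, K s l * (a l ^ 2 / p l) := sum_le_sum row
    _ = ∑ l ∈ L, (∑ s ∈ S, A s * K s l) * (a l ^ 2 / p l) := by
        simp_rw [mul_sum, sum_mul, mul_assoc]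
        exact sum_comm
    _ ≤ ∑ l ∈ L, (B * p l) * (a l ^ 2 / p l) :=
        sum_le_sum fun l hl =>
          mul_le_mul_of_nonneg_right (hB l hl) (div_nonneg (sq_nonneg _) (hp l hl).le)
    _ = B * ∑ l ∈ L, a l ^ 2 := by
        rw [mul_sum]
        exact sum_congr rfl fun l hl => by field_simp [(hp l hl).ne']

lemma inv_sqrt_add_one_le {x : ℝ} (hx : 0 ≤ x) : (√(x + 1))⁻¹ ≤ 2 * (√(x + 1) - √x) := by
  have hv : 0 < √(x + 1) := Real.sqrt_pos.2 (by linarith)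
  have hu2 := Real.sq_sqrt hx
  have hv2 := Real.sq_sqrt (by linarith : 0 ≤ x + 1)
  rw [inv_le_iff_one_le_mul₀ hv]
  nlinarith [sq_nonneg (√(x + 1) - √x)]

lemma inv_mul_sqrt_add_one_le {x : ℝ} (hx : 0 < x) :
    ((x + 1) * √(x + 1))⁻¹ ≤ 2 / √x - 2 / √(x + 1) := by
  have hu : 0 < √x := Real.sqrt_pos.2 hx
  have hv : 0 < √(x + 1) := Real.sqrt_pos.2 (by linarith)
  have hu2 := Real.sq_sqrt hx.le
  have hv2 := Real.sq_sqrt (by linarith : 0 ≤ x + 1)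
  have huv : √x ≤ √(x + 1) := Real.sqrt_le_sqrt (by linarith)
  rw [div_sub_div _ _ hu.ne' hv.ne', inv_le_iff_one_le_mul₀ (by positivity),
    div_mul_eq_mul_div, le_div_iff₀ (by positivity)]
  nlinarith [mul_pos hu hv, mul_pos (mul_pos hu hv) hv,
    mul_nonneg (mul_nonneg hv.le hv.le) (sub_nonneg.2 huv)]

lemma sum_Ioc_inv_sqrt_le (n : ℕ) : ∑ i ∈ Ioc 0 n, (√(i : ℝ))⁻¹ ≤ 2 * √n := by
  induction n with
  | zero => simp
  | succ n ih =>
    rw [sum_Ioc_succ_top n.zero_le]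
    have := inv_sqrt_add_one_le (Nat.cast_nonneg n : (0 : ℝ) ≤ n)
    push_cast
    linarith

lemma sum_Ioc_inv_mul_sqrt_le_sub {k n : ℕ} (hk : k ≠ 0) (h : k ≤ n) :
    ∑ i ∈ Ioc k n, ((i : ℝ) * √i)⁻¹ ≤ 2 / √k - 2 / √n := by
  refine Nat.le_induction (by simp) (fun n hn ih => ?_) n h
  rw [sum_Ioc_succ_top hn]
  have := inv_mul_sqrt_add_one_le (x := n) (Nat.cast_pos.2 (by omega))
  push_cast
  linarith

lemma sum_Icc_inv_add_sub_one_mul_inv_sqrt_le {m : ℕ} (hm : m ≠ 0) (n : ℕ) :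
    ∑ l ∈ Icc 1 n, ((m : ℝ) + l - 1)⁻¹ * (√(l : ℝ))⁻¹ ≤ 4 / √m := by
  have hm1 : (1 : ℝ) ≤ m := Nat.one_le_cast.2 (Nat.one_le_iff_ne_zero.2 hm)
  have hl1 : ∀ l ∈ Ioc 0 (max n m), (1 : ℝ) ≤ l := fun l hl =>
    Nat.one_le_cast.2 (mem_Ioc.1 hl).1
  calc ∑ l ∈ Icc 1 n, ((m : ℝ) + l - 1)⁻¹ * (√(l : ℝ))⁻¹
      ≤ ∑ l ∈ Ioc 0 (max n m), ((m : ℝ) + l - 1)⁻¹ * (√(l : ℝ))⁻¹ := by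
        rw [← zero_add 1, Icc_add_one_left_eq_Ioc]
        refine sum_le_sum_of_subset_of_nonneg (Ioc_subset_Ioc_right (le_max_left n m))
          fun l hl _ => ?_
        exact mul_nonneg (inv_nonneg.2 (by linarith [hl1 l hl])) (by positivity)
    _ = ∑ l ∈ Ioc 0 m, ((m : ℝ) + l - 1)⁻¹ * (√(l : ℝ))⁻¹
          + ∑ l ∈ Ioc m (max n m), ((m : ℝ) + l - 1)⁻¹ * (√(l : ℝ))⁻¹ :=
        (sum_Ioc_consecutive _ m.zero_le (le_max_right n m)).symm
    _ ≤ ∑ l ∈ Ioc 0 m, (m : ℝ)⁻¹ * (√(l : ℝ))⁻¹ + ∑ l ∈ Ioc m (max n m), ((l : ℝ) * √l)⁻¹ := by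
        gcongr with l hl l hl
        · have := hl1 l (Ioc_subset_Ioc_right (le_max_right n m) hl)
          linarith
        · rw [mul_inv]
          have := hl1 l (Ioc_subset_Ioc_left m.zero_le hl)
          gcongr
          linarith
    _ ≤ (m : ℝ)⁻¹ * (2 * √m) + (2 / √m - 2 / √(max n m : ℕ)) := by
        rw [← mul_sum]
        gcongr
        · exact sum_Ioc_inv_sqrt_le m
        · exact sum_Ioc_inv_mul_sqrt_le_sub hm (le_max_right n m)
    _ ≤ 4 / √m := by
        rw [mul_left_comm, inv_mul_eq_div, Real.sqrt_div_self', mul_one_div]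
        have : 0 ≤ 2 / √(max n m : ℕ) := by positivity
        linarith [show (4 : ℝ) / √m = 2 / √m + 2 / √m by ring]

lemma sqrt_two_pow_mul_self (s : ℕ) : √2 ^ s * √2 ^ s = (2 : ℝ) ^ s := by
  rw [← mul_pow, Real.mul_self_sqrt zero_le_two]

lemma sqrt_two_pow (s : ℕ) : √((2 : ℝ) ^ s) = √2 ^ s := by
  rw [← sqrt_two_pow_mul_self, Real.sqrt_mul_self (by positivity)]

lemma four_thirds_le_sqrt_two : (4 / 3 : ℝ) ≤ √2 :=
  Real.le_sqrt_of_sq_le (by norm_num)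

lemma sum_range_sqrt_two_pow_le (k : ℕ) : ∑ s ∈ range (k + 1), √2 ^ s ≤ 4 * √2 ^ k := by
  have hρ := four_thirds_le_sqrt_two
  have hpow : 0 < √2 ^ k := by positivity
  rw [geom_sum_eq (by linarith), div_le_iff₀ (by linarith), pow_succ]
  nlinarith

lemma sum_Ico_inv_sqrt_two_pow_le (k T : ℕ) : ∑ s ∈ Ico k T, (√2)⁻¹ ^ s ≤ 4 * (√2 ^ k)⁻¹ := by
  have hρ := four_thirds_le_sqrt_two
  have hρ' : (√2)⁻¹ ≤ 3 / 4 := by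
    rw [inv_le_comm₀ (by positivity) (by norm_num)]; linarith
  calc ∑ s ∈ Ico k T, (√2)⁻¹ ^ s ≤ (√2)⁻¹ ^ k / (1 - (√2)⁻¹) :=
        geom_sum_Ico_le_of_lt_one (by positivity) (by linarith)
    _ ≤ (√2)⁻¹ ^ k / (1 / 4) := by gcongr; linarith
    _ = 4 * (√2 ^ k)⁻¹ := by rw [inv_pow]; ring

lemma sum_range_sqrt_two_pow_mul_inv_le {l : ℕ} (hl : l ≠ 0) (T : ℕ) :
    ∑ s ∈ range T, √2 ^ s * ((2 : ℝ) ^ s + l - 1)⁻¹ ≤ 8 / √l := by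
  set k := Nat.log 2 l
  have hl1 : (1 : ℝ) ≤ l := Nat.one_le_cast.2 (Nat.one_le_iff_ne_zero.2 hl)
  have hlow : √2 ^ k ≤ √l := by
    rw [← sqrt_two_pow]
    exact Real.sqrt_le_sqrt (by exact_mod_cast Nat.pow_log_le_self 2 hl)
  have hhigh : √l ≤ √2 ^ (k + 1) := by
    rw [← sqrt_two_pow]
    exact Real.sqrt_le_sqrt (by exact_mod_cast (Nat.lt_pow_succ_log_self one_lt_two l).le)
  have hden : ∀ s : ℕ, (l : ℝ) ≤ (2 : ℝ) ^ s + l - 1 := fun s => by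
    linarith [one_le_pow₀ (M₀ := ℝ) one_le_two (n := s)]
  calc ∑ s ∈ range T, √2 ^ s * ((2 : ℝ) ^ s + l - 1)⁻¹
      ≤ ∑ s ∈ range (max T (k + 1)), √2 ^ s * ((2 : ℝ) ^ s + l - 1)⁻¹ :=
        sum_le_sum_of_subset_of_nonneg (range_subset_range.2 (le_max_left _ _))
          fun s _ _ => mul_nonneg (by positivity) (inv_nonneg.2 (by linarith [hden s]))
    _ = ∑ s ∈ range (k + 1), √2 ^ s * ((2 : ℝ) ^ s + l - 1)⁻¹
          + ∑ s ∈ Ico (k + 1) (max T (k + 1)), √2 ^ s * ((2 : ℝ) ^ s + l - 1)⁻¹ :=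
        (sum_range_add_sum_Ico _ (le_max_right _ _)).symm
    _ ≤ (∑ s ∈ range (k + 1), √2 ^ s) * (l : ℝ)⁻¹
          + ∑ s ∈ Ico (k + 1) (max T (k + 1)), (√2)⁻¹ ^ s := by
        rw [sum_mul]
        gcongr with s _ s _
        · exact hden s
        · calc √2 ^ s * ((2 : ℝ) ^ s + l - 1)⁻¹ ≤ √2 ^ s * ((2 : ℝ) ^ s)⁻¹ := by
                gcongr; linarith
            _ = (√2)⁻¹ ^ s := by
                rw [← sqrt_two_pow_mul_self, inv_pow, mul_inv, ← mul_assoc,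
                  mul_inv_cancel₀ (by positivity), one_mul]
    _ ≤ 4 * √l * (l : ℝ)⁻¹ + 4 * (√l)⁻¹ := by
        gcongr
        · exact (sum_range_sqrt_two_pow_le k).trans (by gcongr)
        · exact (sum_Ico_inv_sqrt_two_pow_le _ _).trans (by gcongr)
    _ = 8 / √l := by
        rw [mul_assoc, ← div_eq_mul_inv, Real.sqrt_div_self']
        ring

theorem stmt_6 :
    ∃ C > (0:ℝ), ∀ n : ℕ, 1 ≤ n → ∀ a : ℕ → ℝ, (∀ l, 0 ≤ a l) →
      ∑ s ∈ Finset.range (Nat.log 2 n + 1),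
          (2:ℝ) ^ s * (∑ l ∈ Finset.Icc 1 n, a l / ((2:ℝ) ^ s + l - 1)) ^ 2
        ≤ C * ∑ l ∈ Finset.Icc 1 n, a l ^ 2 := by
  refine ⟨32, by norm_num, fun n _ a _ => ?_⟩
  have hden : ∀ s, ∀ l ∈ Icc 1 n, 0 < (2 : ℝ) ^ s + l - 1 := fun s l hl => by
    linarith [one_le_pow₀ (M₀ := ℝ) one_le_two (n := s),
      (Nat.one_le_cast (α := ℝ)).2 (mem_Icc.1 hl).1]
  simp_rw [div_eq_inv_mul]
  refine schur_test _ _ (fun (s l : ℕ) => ((2 : ℝ) ^ s + l - 1)⁻¹) (fun s => 2 ^ s)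
    (fun s => 4 * √2 ^ s) (fun l : ℕ => (√(l : ℝ))⁻¹) a 32
    (fun s _ l hl => (inv_pos.2 (hden s l hl)).le) (fun s _ => by positivity)
    (fun l hl => inv_pos.2 (Real.sqrt_pos.2 (Nat.cast_pos.2 (mem_Icc.1 hl).1)))
    (fun s _ => ?_) (fun l hl => ?_)
  · have row := sum_Icc_inv_add_sub_one_mul_inv_sqrt_le (m := 2 ^ s) (by positivity) n
    push_cast at row
    rw [sqrt_two_pow] at row
    calc (2 : ℝ) ^ s * ∑ l ∈ Icc 1 n, ((2 : ℝ) ^ s + l - 1)⁻¹ * (√(l : ℝ))⁻¹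
        ≤ 2 ^ s * (4 / √2 ^ s) := by gcongr
      _ = 4 * √2 ^ s := by rw [← sqrt_two_pow_mul_self]; field_simp
  · have column := sum_range_sqrt_two_pow_mul_inv_le
      (Nat.one_le_iff_ne_zero.1 (mem_Icc.1 hl).1) (Nat.log 2 n + 1)
    simp_rw [mul_assoc, ← mul_sum]
    linarith [show (32 : ℝ) * (√(l : ℝ))⁻¹ = 4 * (8 / √l) by ring]
end

section
/- Let (a_m) be a sequence in ℓ²_v (i.e., sum |a_m|² v_m < ∞), where (v_m) are positive with partial sums V_n = sum_{m<n} v_m, and let (τ_n) be nonnegative numbers satisfying sup_n V_n · sum_{m ≥ n} τ_m² ≤ A < ∞. Then sum_{n=1}^{∞} τ_n² (sum_{m=1}^{n-1} |a_m| v_m)² ≤ C·A · sum_{m} |a_m|² v_m for an absolute constant C. -/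
/-!
With `V n = ∑ m < n, v m`, Cauchy–Schwarz with the weights `√V (m + 1)` gives
`(∑ m < n, b m * v m) ^ 2 ≤ 2 √V n * ∑ m < n, b m ^ 2 * v m * √V (m + 1)`, because
`v m / √V (m + 1) ≤ 2 (√V (m + 1) - √V m)` telescopes. Exchanging the order of summation
leaves the tail estimate `∑ n > m, τ n ^ 2 * √V n ≤ 2 A / √V (m + 1)`: summing by parts
against the tails of `τ ^ 2`, each of which is at most `A / V k`, it follows from
`(√V (k + 1) - √V k) / V (k + 1) ≤ 1 / √V k - 1 / √V (k + 1)`, which telescopes again.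
Altogether `C = 4` works.
-/

open Finset Real

lemma div_sqrt_add_le_two_mul_sqrt_sub {x u : ℝ} (hx : 0 ≤ x) (hu : 0 ≤ u) :
    u / √(x + u) ≤ 2 * (√(x + u) - √x) := by
  rcases (add_nonneg hx hu).eq_or_lt with h | h
  · rw [← h, sqrt_zero, div_zero]
    have : x = 0 := by linarith
    simp [this]
  · have hy := sqrt_pos.mpr h
    have hxy : √x ≤ √(x + u) := sqrt_le_sqrt (by linarith)
    rw [div_le_iff₀ hy]
    nlinarith [sq_sqrt hx, sq_sqrt h.le]

lemma sub_div_sq_le_inv_sub_inv {x y : ℝ} (hx : 0 < x) (hxy : x ≤ y) :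
    (y - x) / y ^ 2 ≤ 1 / x - 1 / y := by
  have hy : 0 < y := hx.trans_le hxy
  rw [div_sub_div _ _ hx.ne' hy.ne', div_le_div_iff₀ (by positivity) (by positivity)]
  nlinarith [mul_nonneg (sub_nonneg.mpr hxy) (sub_nonneg.mpr hxy), mul_pos hx hy]

lemma sum_Ico_mul_eq_mul_sum_add_sum_sub_mul_tail {R : Type*} [CommRing R] (w φ : ℕ → R)
    (p N : ℕ) :
    ∑ k ∈ Ico p N, w k * φ k =
      φ p * ∑ k ∈ Ico p N, w k + ∑ j ∈ Ico p N, (φ (j + 1) - φ j) * ∑ k ∈ Ico (j + 1) N, w k := by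
  have hφ : ∀ k ∈ Ico p N, φ k = φ p + ∑ j ∈ Ico p k, (φ (j + 1) - φ j) := fun k hk => by
    rw [sum_Ico_sub φ (mem_Ico.mp hk).1]; abel
  simp only [mul_sum]
  rw [sum_Ico_Ico_comm', ← sum_add_distrib]
  refine sum_congr rfl fun k hk => ?_
  rw [hφ k hk, ← sum_mul]
  ring

section Hardy

variable {v V w : ℕ → ℝ} {A : ℝ}

lemma monotone_of_eq_sum_range (hv : ∀ m, 0 ≤ v m) (hV : ∀ n, V n = ∑ m ∈ range n, v m) :
    Monotone V :=
  monotone_nat_of_le_succ fun n => by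
    rw [hV, hV, sum_range_succ, le_add_iff_nonneg_right]
    exact hv n

lemma nonneg_of_eq_sum_range (hv : ∀ m, 0 ≤ v m) (hV : ∀ n, V n = ∑ m ∈ range n, v m) (n : ℕ) :
    0 ≤ V n :=
  (hV n).symm ▸ sum_nonneg fun m _ => hv m

lemma sum_range_div_sqrt_le (hv : ∀ m, 0 ≤ v m) (hV : ∀ n, V n = ∑ m ∈ range n, v m) (n : ℕ) :
    ∑ m ∈ range n, v m / √(V (m + 1)) ≤ 2 * √(V n) := by
  calc ∑ m ∈ range n, v m / √(V (m + 1))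
      ≤ ∑ m ∈ range n, 2 * (√(V (m + 1)) - √(V m)) := by
        refine sum_le_sum fun m _ => ?_
        rw [hV (m + 1), sum_range_succ, ← hV m]
        exact div_sqrt_add_le_two_mul_sqrt_sub (nonneg_of_eq_sum_range hv hV m) (hv m)
    _ = 2 * √(V n) := by
        rw [← mul_sum, sum_range_sub (fun m => √(V m)), hV 0, sum_range_zero, sqrt_zero, sub_zero]

lemma sq_sum_range_mul_le (b : ℕ → ℝ) (hv : ∀ m, 0 ≤ v m)
    (hV : ∀ n, V n = ∑ m ∈ range n, v m) (n : ℕ) :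
    (∑ m ∈ range n, b m * v m) ^ 2 ≤
      2 * √(V n) * ∑ m ∈ range n, b m ^ 2 * v m * √(V (m + 1)) := by
  have hvV : ∀ m, v m ≤ V (m + 1) := fun m => by
    rw [hV, sum_range_succ, le_add_iff_nonneg_left]
    exact sum_nonneg fun i _ => hv i
  have hsplit : ∀ m ∈ range n,
      (b m * v m) ^ 2 ≤ b m ^ 2 * v m * √(V (m + 1)) * (v m / √(V (m + 1))) := fun m _ => by
    rcases (sqrt_nonneg (V (m + 1))).eq_or_lt with h | h
    · have : v m = 0 := le_antisymm ((hvV m).trans (sqrt_eq_zero'.mp h.symm)) (hv m)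
      simp [this]
    · exact le_of_eq (by field_simp)
  calc (∑ m ∈ range n, b m * v m) ^ 2
      ≤ (∑ m ∈ range n, b m ^ 2 * v m * √(V (m + 1))) * ∑ m ∈ range n, v m / √(V (m + 1)) :=
        sum_sq_le_sum_mul_sum_of_sq_le_mul _ (fun m _ => by have := hv m; positivity)
          (fun m _ => by have := hv m; positivity) hsplit
    _ ≤ (∑ m ∈ range n, b m ^ 2 * v m * √(V (m + 1))) * (2 * √(V n)) := by
        gcongr
        · exact sum_nonneg fun m _ => by have := hv m; positivity
        · exact sum_range_div_sqrt_le hv hV n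
    _ = _ := mul_comm _ _

lemma sum_Ico_mul_sqrt_le (hv : ∀ m, 0 ≤ v m) (hV : ∀ n, V n = ∑ m ∈ range n, v m)
    (hA : ∀ n N, V n * ∑ k ∈ Ico n N, w k ≤ A) {p : ℕ} (hp : 0 < V p) (N : ℕ) :
    ∑ k ∈ Ico p N, w k * √(V k) ≤ 2 * A / √(V p) := by
  have hA0 : 0 ≤ A := by simpa using hA p p
  have hsp : 0 < √(V p) := sqrt_pos.mpr hp
  rcases le_or_gt N p with hNp | hpN
  · rw [Ico_eq_empty_of_le hNp, sum_empty]
    positivity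
  have hVmono := monotone_of_eq_sum_range hv hV
  have hVpos : ∀ j, p ≤ j → 0 < V j := fun j hj => hp.trans_le (hVmono hj)
  have hpos : ∀ j, p ≤ j → 0 < √(V j) := fun j hj => sqrt_pos.mpr (hVpos j hj)
  have hsq : ∀ j, √(V j) ^ 2 = V j := fun j => sq_sqrt (nonneg_of_eq_sum_range hv hV j)
  have head : √(V p) * ∑ k ∈ Ico p N, w k ≤ A / √(V p) := by
    rw [le_div_iff₀ hsp, mul_right_comm, ← sq, hsq]
    exact hA p N
  have step : ∀ j ∈ Ico p N, (√(V (j + 1)) - √(V j)) * ∑ k ∈ Ico (j + 1) N, w k ≤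
      A * (1 / √(V j) - 1 / √(V (j + 1))) := fun j hj => by
    have hpj := (mem_Ico.mp hj).1
    have hxy : √(V j) ≤ √(V (j + 1)) := sqrt_le_sqrt (hVmono j.le_succ)
    calc (√(V (j + 1)) - √(V j)) * ∑ k ∈ Ico (j + 1) N, w k
        = (√(V (j + 1)) - √(V j)) / √(V (j + 1)) ^ 2 * (V (j + 1) * ∑ k ∈ Ico (j + 1) N, w k) := by
          rw [hsq]
          field_simp [(hVpos (j + 1) (by omega)).ne']
      _ ≤ (√(V (j + 1)) - √(V j)) / √(V (j + 1)) ^ 2 * A := by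
          gcongr
          exact hA (j + 1) N
      _ ≤ (1 / √(V j) - 1 / √(V (j + 1))) * A := by
          gcongr
          exact sub_div_sq_le_inv_sub_inv (hpos j hpj) hxy
      _ = _ := mul_comm _ _
  have telescope : ∑ j ∈ Ico p N, (1 / √(V j) - 1 / √(V (j + 1))) = 1 / √(V p) - 1 / √(V N) := by
    have := sum_Ico_sub (fun j => -(1 / √(V j))) hpN.le
    simp only [neg_sub_neg] at this
    rw [this]
  calc ∑ k ∈ Ico p N, w k * √(V k)
      = √(V p) * ∑ k ∈ Ico p N, w k +
          ∑ j ∈ Ico p N, (√(V (j + 1)) - √(V j)) * ∑ k ∈ Ico (j + 1) N, w k :=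
        sum_Ico_mul_eq_mul_sum_add_sum_sub_mul_tail _ _ p N
    _ ≤ A / √(V p) + A * (1 / √(V p) - 1 / √(V N)) := by
        rw [← telescope]
        exact add_le_add head ((sum_le_sum step).trans_eq (mul_sum _ _ _).symm)
    _ ≤ A / √(V p) + A * (1 / √(V p)) := by
        have := hpos N hpN.le
        gcongr
        exact sub_le_self _ (by positivity)
    _ = 2 * A / √(V p) := by ring

theorem sum_range_mul_sq_sum_le (b : ℕ → ℝ) (hv : ∀ m, 0 ≤ v m)
    (hV : ∀ n, V n = ∑ m ∈ range n, v m) (hw : ∀ n, 0 ≤ w n)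
    (hA : ∀ n N, V n * ∑ k ∈ Ico n N, w k ≤ A) (N : ℕ) :
    ∑ n ∈ range N, w n * (∑ m ∈ range n, b m * v m) ^ 2 ≤ 4 * A * ∑ m ∈ range N, b m ^ 2 * v m := by
  have hA0 : 0 ≤ A := by simpa using hA 0 0
  have hterm : ∀ m, b m ^ 2 * v m * √(V (m + 1)) * (2 * ∑ n ∈ Ico (m + 1) N, w n * √(V n)) ≤
      4 * A * (b m ^ 2 * v m) := fun m => by
    have hbv : 0 ≤ b m ^ 2 * v m := mul_nonneg (sq_nonneg _) (hv m)
    rcases (nonneg_of_eq_sum_range hv hV (m + 1)).eq_or_lt with h | h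
    · rw [← h, sqrt_zero, mul_zero, zero_mul]
      positivity
    · have hs := sqrt_pos.mpr h
      calc b m ^ 2 * v m * √(V (m + 1)) * (2 * ∑ n ∈ Ico (m + 1) N, w n * √(V n))
          ≤ b m ^ 2 * v m * √(V (m + 1)) * (2 * (2 * A / √(V (m + 1)))) := by
            gcongr
            exact sum_Ico_mul_sqrt_le hv hV hA h N
        _ = 4 * A * (b m ^ 2 * v m) := by field_simp; ring
  calc ∑ n ∈ range N, w n * (∑ m ∈ range n, b m * v m) ^ 2
      ≤ ∑ n ∈ range N, w n * (2 * √(V n) * ∑ m ∈ range n, b m ^ 2 * v m * √(V (m + 1))) := by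
        gcongr with n
        · exact hw n
        · exact sq_sum_range_mul_le b hv hV n
    _ = ∑ m ∈ range N,
          b m ^ 2 * v m * √(V (m + 1)) * (2 * ∑ n ∈ Ico (m + 1) N, w n * √(V n)) := by
        simp only [range_eq_Ico, mul_sum]
        rw [sum_Ico_Ico_comm']
        exact sum_congr rfl fun n _ => sum_congr rfl fun m _ => by ring
    _ ≤ ∑ m ∈ range N, 4 * A * (b m ^ 2 * v m) := sum_le_sum fun m _ => hterm m
    _ = 4 * A * ∑ m ∈ range N, b m ^ 2 * v m := (mul_sum _ _ _).symm

end Hardy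

lemma sum_Icc_one_sub_one_eq_sum_range_ite {M : Type*} [AddCommMonoid M] (f : ℕ → M) (n : ℕ) :
    ∑ m ∈ Icc 1 (n - 1), f m = ∑ m ∈ range n, if 1 ≤ m then f m else 0 := by
  rw [← sum_filter]
  congr 1
  ext m
  simp only [mem_Icc, mem_filter, mem_range]
  omega

theorem stmt_13 :
    ∃ C > (0:ℝ), ∀ (v : ℕ → ℝ) (a : ℕ → ℂ) (τ : ℕ → ℝ) (V : ℕ → ℝ) (A : ℝ),
      (∀ m, 0 < v m) →
      (∀ n, V n = ∑ m ∈ Finset.Icc 1 (n - 1), v m) →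
      Summable (fun m : ℕ => ‖a m‖ ^ 2 * v m) →
      (∀ n, 0 ≤ τ n) →
      (∀ n, Summable (fun m : ℕ => if n ≤ m then τ m ^ 2 else 0)) →
      (∀ n, V n * (∑' m : ℕ, if n ≤ m then τ m ^ 2 else 0) ≤ A) →
      (∑' n : ℕ, τ n ^ 2 * (∑ m ∈ Finset.Icc 1 (n - 1), ‖a m‖ * v m) ^ 2)
        ≤ C * A * ∑' m : ℕ, ‖a m‖ ^ 2 * v m := by
  refine ⟨4, by norm_num, fun v a τ V A hv hV ha _ hsum hA => ?_⟩
  set v' : ℕ → ℝ := fun m => if 1 ≤ m then v m else 0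
  have hv' : ∀ m, 0 ≤ v' m := fun m => by unfold v'; split_ifs <;> linarith [hv m]
  have hv'v : ∀ m, v' m ≤ v m := fun m => by unfold v'; split_ifs <;> linarith [hv m]
  have hV' : ∀ n, V n = ∑ m ∈ range n, v' m := fun n =>
    (hV n).trans (sum_Icc_one_sub_one_eq_sum_range_ite v n)
  have hinner : ∀ n, ∑ m ∈ Icc 1 (n - 1), ‖a m‖ * v m = ∑ m ∈ range n, ‖a m‖ * v' m := fun n => by
    simp only [sum_Icc_one_sub_one_eq_sum_range_ite, v', mul_ite, mul_zero]
  have hA' : ∀ n N, V n * ∑ k ∈ Ico n N, τ k ^ 2 ≤ A := fun n N => by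
    refine le_trans (mul_le_mul_of_nonneg_left ?_ (nonneg_of_eq_sum_range hv' hV' n)) (hA n)
    calc ∑ k ∈ Ico n N, τ k ^ 2 = ∑ k ∈ Ico n N, if n ≤ k then τ k ^ 2 else 0 :=
          sum_congr rfl fun k hk => (if_pos (mem_Ico.mp hk).1).symm
      _ ≤ _ := (hsum n).sum_le_tsum _ fun _ _ => by positivity
  have hA0 : 0 ≤ A := by simpa using hA' 0 0
  refine Real.tsum_le_of_sum_range_le (fun n => by positivity) fun N => ?_
  calc ∑ n ∈ range N, τ n ^ 2 * (∑ m ∈ Icc 1 (n - 1), ‖a m‖ * v m) ^ 2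
      = ∑ n ∈ range N, τ n ^ 2 * (∑ m ∈ range n, ‖a m‖ * v' m) ^ 2 := by simp only [hinner]
    _ ≤ 4 * A * ∑ m ∈ range N, ‖a m‖ ^ 2 * v' m :=
        sum_range_mul_sq_sum_le _ hv' hV' (fun n => sq_nonneg _) hA' N
    _ ≤ 4 * A * ∑' m, ‖a m‖ ^ 2 * v m := by
        gcongr
        exact (sum_le_sum fun m _ => by gcongr; exact hv'v m).trans
          (ha.sum_le_tsum _ fun m _ => mul_nonneg (sq_nonneg _) (hv m).le)
end

section
/- Let δ ∈ (0, 1/2) and N a positive integer, and let (w_j), (W_j) be positive reals with W_{j+1} = W_j + w_j, W_1 > 0, and w_j ≤ δ·W_j for all j. Suppose indices are grouped into consecutive blocks B_1, B_2, ... such that for each block, δ ≤ sum_{j ∈ B_i} w_j/W_j < 2δ. Then along the subsequence obtained by keeping every N-th block, one has for any retained index j: sum over retained indices l < j (from retained blocks only) of w_l/W_{l+1}^{1/2} ≤ (16δ/(1 - (1-2δ)^N))·W_j^{1/2}. -/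
/-!
Each block multiplies `W` by at least `1 + δ`, since its relative increments `w l / W l` add up
to at least `δ`. A block cut off at `u` contributes at most `2δ √(W u)`, because
`w l / √(W (l + 1)) ≤ (w l / W l) √(W u)`. Between the ends of two consecutive retained blocks
there are `N` growth steps, so with `c = √(1 + δ)` the contribution of the `k`-th retained block
is at most `2δ c (c⁻¹ ^ N) ^ (K - k) √(W j)`, where the `K`-th one contains `j`; the geometric
series sums to `2δ c / (1 - c⁻¹ ^ N)`. This constant is compared with `16δ / (1 - (1 - 2δ) ^ N)`
through `(1 - u ^ N) (1 - r) ≤ (1 - u) (1 - r ^ N)` for `0 ≤ u ≤ r ≤ 1`, applied to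
`u = 1 - 2δ ≤ r = c⁻¹`.
-/

open Finset

section Increments

variable {w W : ℕ → ℝ}

lemma pos_of_succ_eq_add (hw : ∀ j, 0 < w j) (hW1 : 0 < W 1)
    (hWrec : ∀ j ≥ 1, W (j + 1) = W j + w j) {j : ℕ} (hj : 1 ≤ j) : 0 < W j := by
  induction j, hj using Nat.le_induction with
  | base => exact hW1
  | succ n hn ih => rw [hWrec n hn]; exact add_pos ih (hw n)

lemma monotoneOn_of_succ_eq_add (hw : ∀ j, 0 ≤ w j) (hWrec : ∀ j ≥ 1, W (j + 1) = W j + w j) :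
    MonotoneOn W {j | 1 ≤ j} :=
  monotoneOn_nat_Ici_of_le_succ fun j hj => by rw [hWrec j hj]; linarith [hw j]

lemma sum_Ico_eq_sub_of_succ_eq_add (hWrec : ∀ j ≥ 1, W (j + 1) = W j + w j) {a c : ℕ}
    (ha : 1 ≤ a) (hac : a ≤ c) : ∑ l ∈ Ico a c, w l = W c - W a := by
  induction c, hac using Nat.le_induction with
  | base => simp
  | succ n hn ih => rw [sum_Ico_succ_top hn, ih, hWrec n (ha.trans hn)]; ring

lemma one_add_mul_le_of_le_sum_div (hw : ∀ j, 0 < w j) (hW1 : 0 < W 1)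
    (hWrec : ∀ j ≥ 1, W (j + 1) = W j + w j) {a c : ℕ} (ha : 1 ≤ a) (hac : a ≤ c) {δ : ℝ}
    (hδ : δ ≤ ∑ l ∈ Ico a c, w l / W l) : (1 + δ) * W a ≤ W c := by
  have hWa := pos_of_succ_eq_add hw hW1 hWrec ha
  have hmono := monotoneOn_of_succ_eq_add (fun j => (hw j).le) hWrec
  have : ∑ l ∈ Ico a c, w l / W l ≤ (W c - W a) / W a := by
    rw [← sum_Ico_eq_sub_of_succ_eq_add hWrec ha hac, sum_div]
    refine sum_le_sum fun l hl => div_le_div_of_nonneg_left (hw l).le hWa ?_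
    exact hmono ha (ha.trans (mem_Ico.1 hl).1) (mem_Ico.1 hl).1
  have := hδ.trans this
  rw [le_div_iff₀ hWa] at this
  linarith

lemma sum_Ico_div_sqrt_le (hw : ∀ j, 0 < w j) (hW1 : 0 < W 1)
    (hWrec : ∀ j ≥ 1, W (j + 1) = W j + w j) {a c u : ℕ} (ha : 1 ≤ a) (huc : u ≤ c) {M : ℝ}
    (hM : ∑ l ∈ Ico a c, w l / W l ≤ M) :
    ∑ l ∈ Ico a u, w l / √(W (l + 1)) ≤ M * √(W u) := by
  have hmono := monotoneOn_of_succ_eq_add (fun j => (hw j).le) hWrec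
  have hterm : ∀ l ∈ Ico a u, w l / √(W (l + 1)) ≤ w l / W l * √(W u) := by
    intro l hl
    obtain ⟨hal, hlu⟩ := mem_Ico.1 hl
    have hWl := pos_of_succ_eq_add hw hW1 hWrec (ha.trans hal)
    calc w l / √(W (l + 1)) = w l / W (l + 1) * √(W (l + 1)) := by
          rw [div_mul_eq_mul_div, mul_div_assoc, Real.sqrt_div_self, div_eq_mul_inv]
      _ ≤ w l / W l * √(W u) := by
          gcongr
          · exact div_nonneg (hw l).le hWl.le
          · exact (hw l).le
          · rw [hWrec l (ha.trans hal)]; linarith [hw l]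
          · exact hmono (show 1 ≤ l + 1 by omega) (show 1 ≤ u by omega) hlu
  calc ∑ l ∈ Ico a u, w l / √(W (l + 1)) ≤ (∑ l ∈ Ico a u, w l / W l) * √(W u) := by
        rw [sum_mul]; exact sum_le_sum hterm
    _ ≤ (∑ l ∈ Ico a c, w l / W l) * √(W u) := by
        gcongr
        · intro l hl _
          exact div_nonneg (hw l).le (pos_of_succ_eq_add hw hW1 hWrec
            (ha.trans (mem_Ico.1 hl).1)).le
    _ ≤ M * √(W u) := by gcongr

end Increments

lemma pow_mul_le_of_mul_le_succ {V : ℕ → ℝ} {c : ℝ} (hc : 0 ≤ c) {i₀ : ℕ}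
    (hV : ∀ i ≥ i₀, c * V i ≤ V (i + 1)) {i : ℕ} (hi : i₀ ≤ i) (m : ℕ) :
    c ^ m * V i ≤ V (i + m) := by
  induction m with
  | zero => simp
  | succ m ih =>
    calc c ^ (m + 1) * V i = c * (c ^ m * V i) := by ring
      _ ≤ c * V (i + m) := by gcongr
      _ ≤ V (i + (m + 1)) := hV _ (by omega)

-- `c * (c⁻¹ ^ N) ^ (K - k) = c⁻¹ ^ ((K - k) * N - 1)`: one factor per step from `k * N + 2`
-- to `K * N + 1`.
lemma le_mul_inv_pow_of_mul_le_succ {V : ℕ → ℝ} {c : ℝ} (hc : 0 < c)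
    (hV : ∀ i ≥ 1, c * V i ≤ V (i + 1)) {N k K : ℕ} (hN : 1 ≤ N) (hkK : k < K) :
    V (k * N + 2) ≤ c * (c⁻¹ ^ N) ^ (K - k) * V (K * N + 1) := by
  obtain ⟨n, rfl⟩ : ∃ n, N = n + 1 := ⟨N - 1, by omega⟩
  obtain ⟨m, rfl⟩ : ∃ m, K = k + m + 1 := ⟨K - k - 1, by omega⟩
  set p := m * (n + 1) + n
  have hgrow := pow_mul_le_of_mul_le_succ hc.le hV (show 1 ≤ k * (n + 1) + 2 by omega) p
  rw [show k * (n + 1) + 2 + p = (k + m + 1) * (n + 1) + 1 by ring] at hgrow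
  have hexp : c * (c⁻¹ ^ (n + 1)) ^ (k + m + 1 - k) = c⁻¹ ^ p := by
    rw [show k + m + 1 - k = m + 1 by omega, ← pow_mul, show (n + 1) * (m + 1) = p + 1 by ring,
      pow_succ, mul_comm, mul_assoc, inv_mul_cancel₀ hc.ne', mul_one]
  rw [hexp]
  calc V (k * (n + 1) + 2) = c⁻¹ ^ p * (c ^ p * V (k * (n + 1) + 2)) := by
        rw [← mul_assoc, ← mul_pow, inv_mul_cancel₀ hc.ne', one_pow, one_mul]
    _ ≤ _ := by gcongr

lemma sum_range_pow_sub_le {ρ : ℝ} (h0 : 0 ≤ ρ) (h1 : ρ < 1) (K : ℕ) :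
    ∑ k ∈ range (K + 1), ρ ^ (K - k) ≤ (1 - ρ)⁻¹ := by
  have hreflect := sum_range_reflect (ρ ^ ·) (K + 1)
  simp only [Nat.add_sub_cancel] at hreflect
  rw [hreflect]
  simpa only [← range_eq_Ico, pow_zero, one_div] using
    geom_sum_Ico_le_of_lt_one (m := 0) (n := K + 1) h0 h1

lemma one_sub_pow_mul_one_sub_le {u r : ℝ} (hu : 0 ≤ u) (hur : u ≤ r) (hr : r ≤ 1) (n : ℕ) :
    (1 - u ^ n) * (1 - r) ≤ (1 - u) * (1 - r ^ n) := by
  have hsum : ∑ i ∈ range n, u ^ i ≤ ∑ i ∈ range n, r ^ i :=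
    sum_le_sum fun i _ => pow_le_pow_left₀ hu hur i
  have hpos : 0 ≤ (1 - u) * (1 - r) := mul_nonneg (by linarith) (by linarith)
  rw [← mul_neg_geom_sum u n, ← mul_neg_geom_sum r n]
  calc (1 - u) * (∑ i ∈ range n, u ^ i) * (1 - r)
        = (1 - u) * (1 - r) * ∑ i ∈ range n, u ^ i := by ring
    _ ≤ (1 - u) * (1 - r) * ∑ i ∈ range n, r ^ i := by gcongr
    _ = (1 - u) * ((1 - r) * ∑ i ∈ range n, r ^ i) := by ring

lemma two_mul_sqrt_one_add_mul_inv_le {δ : ℝ} (hδ : δ ∈ Set.Ioo (0 : ℝ) (1 / 2)) {N : ℕ}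
    (hN : 1 ≤ N) :
    2 * δ * √(1 + δ) * (1 - (√(1 + δ))⁻¹ ^ N)⁻¹ ≤ 16 * δ / (1 - (1 - 2 * δ) ^ N) := by
  obtain ⟨hδ0, hδ2⟩ := hδ
  set c := √(1 + δ)
  have hcsq : c ^ 2 = 1 + δ := Real.sq_sqrt (by linarith)
  have hc1 : 1 < c := by nlinarith [Real.sqrt_nonneg (1 + δ)]
  have hc32 : c < 3 / 2 := by nlinarith
  have hr : c⁻¹ < 1 := inv_lt_one_of_one_lt₀ hc1
  have hur : 1 - 2 * δ ≤ c⁻¹ := by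
    have : c ≤ 1 + δ / 2 := by nlinarith
    rw [← one_div, le_div_iff₀ (by linarith)]
    nlinarith
  have hρ : c⁻¹ ^ N < 1 := pow_lt_one₀ (by positivity) hr (by omega)
  have hσ : (1 - 2 * δ) ^ N < 1 := pow_lt_one₀ (by linarith) (by linarith) (by omega)
  have hgeom := one_sub_pow_mul_one_sub_le (by linarith) hur hr.le N
  have hδσ : δ * (1 - (1 - 2 * δ) ^ N) ≤ 2 * δ * c * (c + 1) * (1 - c⁻¹ ^ N) := by
    have : (1 - c⁻¹) * (c * (c + 1)) = δ := by field_simp; linarith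
    nlinarith
  have hσρ : 1 - (1 - 2 * δ) ^ N ≤ 2 * c * (c + 1) * (1 - c⁻¹ ^ N) :=
    le_of_mul_le_mul_left (by linarith) hδ0
  have hc3 : c ^ 2 * (c + 1) ≤ 4 := by nlinarith
  rw [← div_eq_mul_inv, div_le_div_iff₀ (by linarith) (by linarith)]
  calc 2 * δ * c * (1 - (1 - 2 * δ) ^ N)
        ≤ 2 * δ * c * (2 * c * (c + 1) * (1 - c⁻¹ ^ N)) := by gcongr
    _ = 4 * δ * (c ^ 2 * (c + 1)) * (1 - c⁻¹ ^ N) := by ring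
    _ ≤ 4 * δ * 4 * (1 - c⁻¹ ^ N) := by gcongr
    _ = 16 * δ * (1 - c⁻¹ ^ N) := by ring

open Classical in
lemma sum_range_ite_le_sum_Ico_min {b : ℕ → ℕ} (hb : MonotoneOn b {i | 1 ≤ i}) {N : ℕ}
    (hN : 1 ≤ N) {f : ℕ → ℝ} (hf : ∀ l, 0 ≤ f l) {j K : ℕ} (hjK : j < b (K * N + 2)) :
    (∑ l ∈ range j, if (∃ k : ℕ, b (k * N + 1) ≤ l ∧ l < b (k * N + 2)) then f l else 0)
      ≤ ∑ k ∈ range (K + 1), ∑ l ∈ Ico (b (k * N + 1)) (min (b (k * N + 2)) j), f l := by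
  have hsep : ∀ {k k'}, k < k' → b (k * N + 2) ≤ b (k' * N + 1) := fun {k k'} h =>
    hb (show 1 ≤ k * N + 2 by omega) (show 1 ≤ k' * N + 1 by omega) (by nlinarith)
  have hcover : {l ∈ range j | ∃ k, b (k * N + 1) ≤ l ∧ l < b (k * N + 2)}
      ⊆ (range (K + 1)).biUnion fun k => Ico (b (k * N + 1)) (min (b (k * N + 2)) j) := by
    simp only [subset_iff, mem_filter, mem_range, mem_biUnion, mem_Ico, lt_min_iff]
    rintro l ⟨hlj, k, hkl, hlk⟩
    refine ⟨k, ?_, hkl, hlk, hlj⟩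
    by_contra! hKk
    have := hsep (show K < k by omega)
    omega
  have hdisj : (range (K + 1) : Set ℕ).PairwiseDisjoint
      fun k => Ico (b (k * N + 1)) (min (b (k * N + 2)) j) := by
    intro k _ k' _ hkk'
    simp only [Function.onFun, disjoint_left, mem_Ico, lt_min_iff]
    rcases hkk'.lt_or_gt with h | h <;> have := hsep h <;> omega
  rw [← sum_filter, ← sum_biUnion hdisj]
  exact sum_le_sum_of_subset_of_nonneg hcover fun l _ _ => hf l

lemma sqrt_min_le_mul_inv_pow {W : ℕ → ℝ} (hW : MonotoneOn W {j | 1 ≤ j}) {b : ℕ → ℕ}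
    (hb : ∀ i ≥ 1, 1 ≤ b i) {δ : ℝ} (hδ : 0 ≤ δ)
    (hgrow : ∀ i ≥ 1, (1 + δ) * W (b i) ≤ W (b (i + 1))) {N j k K : ℕ} (hN : 1 ≤ N)
    (hKj : b (K * N + 1) ≤ j) (hkK : k ≤ K) :
    √(W (min (b (k * N + 2)) j)) ≤ √(1 + δ) * ((√(1 + δ))⁻¹ ^ N) ^ (K - k) * √(W j) := by
  have hb2 := hb (k * N + 2) (by omega)
  have hj : 1 ≤ j := (hb _ (by omega)).trans hKj
  have hc : 1 ≤ √(1 + δ) := Real.one_le_sqrt.2 (by linarith)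
  rcases hkK.lt_or_eq with hlt | rfl
  · have hV : ∀ i ≥ 1, √(1 + δ) * √(W (b i)) ≤ √(W (b (i + 1))) := fun i hi => by
      rw [← Real.sqrt_mul (by linarith)]
      exact Real.sqrt_le_sqrt (hgrow i hi)
    calc √(W (min (b (k * N + 2)) j)) ≤ √(W (b (k * N + 2))) :=
          Real.sqrt_le_sqrt (hW (le_min hb2 hj) hb2 (min_le_left _ _))
      _ ≤ √(1 + δ) * ((√(1 + δ))⁻¹ ^ N) ^ (K - k) * √(W (b (K * N + 1))) :=
          le_mul_inv_pow_of_mul_le_succ (by positivity) hV hN hlt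
      _ ≤ √(1 + δ) * ((√(1 + δ))⁻¹ ^ N) ^ (K - k) * √(W j) := by
          gcongr
          exact hW (hb _ (by omega)) hj hKj
  · calc √(W (min (b (k * N + 2)) j)) ≤ √(W j) :=
          Real.sqrt_le_sqrt (hW (le_min hb2 hj) hj (min_le_right _ _))
      _ ≤ √(1 + δ) * ((√(1 + δ))⁻¹ ^ N) ^ (k - k) * √(W j) := by
          rw [Nat.sub_self, pow_zero, mul_one]
          exact le_mul_of_one_le_left (Real.sqrt_nonneg _) hc

open Classical in
theorem stmt_19_general (δ : ℝ) (hδ : δ ∈ Set.Ioo (0:ℝ) (1/2)) (N : ℕ) (hN : 1 ≤ N)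
    (w W : ℕ → ℝ) (hw : ∀ j, 0 < w j) (hW1 : 0 < W 1)
    (hWrec : ∀ j ≥ 1, W (j + 1) = W j + w j)
    (b : ℕ → ℕ) (hb1 : b 1 = 1) (hbmono : ∀ i ≥ 1, b i < b (i + 1))
    (hblock : ∀ i ≥ 1,
      δ ≤ ∑ j ∈ Finset.Ico (b i) (b (i + 1)), w j / W j ∧
      (∑ j ∈ Finset.Ico (b i) (b (i + 1)), w j / W j) < 2 * δ) :
    ∀ j : ℕ, (∃ k : ℕ, b (k * N + 1) ≤ j ∧ j < b (k * N + 2)) →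
      (∑ l ∈ Finset.range j,
          if (∃ k : ℕ, b (k * N + 1) ≤ l ∧ l < b (k * N + 2)) then
            w l / Real.sqrt (W (l + 1)) else 0)
        ≤ (16 * δ / (1 - (1 - 2 * δ) ^ N)) * Real.sqrt (W j) := by
  rintro j ⟨K, hKj, hjK⟩
  have hb : MonotoneOn b {i | 1 ≤ i} :=
    monotoneOn_nat_Ici_of_le_succ fun i hi => (hbmono i hi).le
  have hb_one : ∀ i ≥ 1, 1 ≤ b i := fun i hi => hb1 ▸ hb (le_refl 1) hi hi
  have hgrow : ∀ i ≥ 1, (1 + δ) * W (b i) ≤ W (b (i + 1)) := fun i hi =>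
    one_add_mul_le_of_le_sum_div hw hW1 hWrec (hb_one i hi) (hbmono i hi).le (hblock i hi).1
  have hδ0 : 0 < δ := hδ.1
  set c := √(1 + δ)
  have hc : 1 < c := Real.lt_sqrt_of_sq_lt (by linarith)
  set ρ := c⁻¹ ^ N
  have hρ : ρ < 1 := pow_lt_one₀ (by positivity) (inv_lt_one_of_one_lt₀ hc) (by omega)
  calc _ ≤ ∑ k ∈ range (K + 1), ∑ l ∈ Ico (b (k * N + 1)) (min (b (k * N + 2)) j),
          w l / √(W (l + 1)) :=
        sum_range_ite_le_sum_Ico_min hb hN (fun l => div_nonneg (hw l).le (Real.sqrt_nonneg _)) hjK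
    _ ≤ ∑ k ∈ range (K + 1), 2 * δ * (c * ρ ^ (K - k) * √(W j)) := by
        refine sum_le_sum fun k hk => ?_
        refine (sum_Ico_div_sqrt_le hw hW1 hWrec (hb_one _ (by omega)) (min_le_left _ _)
          (hblock _ (by omega)).2.le).trans ?_
        gcongr
        exact sqrt_min_le_mul_inv_pow (monotoneOn_of_succ_eq_add (fun j => (hw j).le) hWrec)
          hb_one hδ0.le hgrow hN hKj (mem_range_succ_iff.1 hk)
    _ = 2 * δ * c * (∑ k ∈ range (K + 1), ρ ^ (K - k)) * √(W j) := by
        rw [mul_sum, sum_mul]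
        exact sum_congr rfl fun k _ => by ring
    _ ≤ 2 * δ * c * (1 - ρ)⁻¹ * √(W j) := by
        gcongr
        exact sum_range_pow_sub_le (by positivity) hρ K
    _ ≤ 16 * δ / (1 - (1 - 2 * δ) ^ N) * √(W j) := by
        gcongr
        exact two_mul_sqrt_one_add_mul_inv_le hδ hN

open Classical in
theorem stmt_19 (δ : ℝ) (hδ : δ ∈ Set.Ioo (0:ℝ) (1/2)) (N : ℕ) (hN : 1 ≤ N)
    (w W : ℕ → ℝ) (hw : ∀ j, 0 < w j) (hW1 : 0 < W 1)
    (hWrec : ∀ j ≥ 1, W (j + 1) = W j + w j)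
    (hsmall : ∀ j ≥ 1, w j ≤ δ * W j)
    (b : ℕ → ℕ) (hb1 : b 1 = 1) (hbmono : ∀ i ≥ 1, b i < b (i + 1))
    (hblock : ∀ i ≥ 1,
      δ ≤ ∑ j ∈ Finset.Ico (b i) (b (i + 1)), w j / W j ∧
      (∑ j ∈ Finset.Ico (b i) (b (i + 1)), w j / W j) < 2 * δ) :
    ∀ j : ℕ, (∃ k : ℕ, b (k * N + 1) ≤ j ∧ j < b (k * N + 2)) →
      (∑ l ∈ Finset.range j,
          if (∃ k : ℕ, b (k * N + 1) ≤ l ∧ l < b (k * N + 2)) then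
            w l / Real.sqrt (W (l + 1)) else 0)
        ≤ (16 * δ / (1 - (1 - 2 * δ) ^ N)) * Real.sqrt (W j) :=
  stmt_19_general δ hδ N hN w W hw hW1 hWrec b hb1 hbmono hblock
end
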